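/- For an odd prime p and n ≥ 1, the number of orbits of the Borel subgroup Γ₀(ℤ/pⁿℤ) acting on the set F₁(ℤ/pⁿℤ) of unimodular pairs equals 2·p^{(n-1)/2} if n is odd, and p^{n/2} + p^{n/2 - 1} if n is even. -/

import Mathlib

open Matrix

/-- The Borel subgroup `Γ₀(R)` of upper triangular matrices in `SL₂(R)`. -/
def Gamma0 (R : Type*) [CommRing R] : Subgroup (Matrix.SpecialLinearGroup (Fin 2) R) where
  carrier := {A | A.1 1 0 = 0}
  one_mem' := by simp [Matrix.one_apply]
  mul_mem' := by
    intro a b ha hb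
    simp only [Set.mem_setOf_eq] at *
    have : ((a * b : Matrix.SpecialLinearGroup (Fin 2) _)).1 1 0
        = a.1 1 0 * b.1 0 0 + a.1 1 1 * b.1 1 0 := by
      simp [Matrix.mul_apply, Fin.sum_univ_two]
    rw [this, ha, hb]; ring
  inv_mem' := by
    intro a ha
    simp only [Set.mem_setOf_eq] at *
    rw [Matrix.SpecialLinearGroup.SL2_inv_expl]
    simp [ha]

/-- A pair is unimodular (over a local ring) if one of its entries is a unit. -/
def IsUnimodular {R : Type*} [CommRing R] (v : Fin 2 → R) : Prop :=
  IsUnit (v 0) ∨ IsUnit (v 1)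

def P1Setoid (R : Type*) [CommRing R] : Setoid {v : Fin 2 → R // IsUnimodular v} where
  r x y := ∃ u : Rˣ, u • x.1 = y.1
  iseqv := by
    refine ⟨fun x => ⟨1, one_smul _ _⟩, ?_, ?_⟩
    · rintro x y ⟨u, h⟩
      exact ⟨u⁻¹, by rw [← h, inv_smul_smul]⟩
    · rintro x y z ⟨u, h⟩ ⟨w, h2⟩
      exact ⟨w * u, by rw [← h2, ← h]; exact (smul_smul w u x.1).symm ▸ rfl⟩

/-- The projective line over `R`: unimodular pairs up to unit scaling. -/
def P1 (R : Type*) [CommRing R] := Quotient (P1Setoid R)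

def P1.mk {R : Type*} [CommRing R] (v : Fin 2 → R) (h : IsUnimodular v) : P1 R :=
  Quotient.mk (P1Setoid R) ⟨v, h⟩

theorem isUnimodular_mulVec {R : Type*} [CommRing R] [IsLocalRing R]
    (g : Matrix.SpecialLinearGroup (Fin 2) R) {v : Fin 2 → R} (hv : IsUnimodular v) :
    IsUnimodular (g.1.mulVec v) := by
  by_contra h
  rw [IsUnimodular, not_or] at h
  obtain ⟨h0, h1⟩ := h
  have hv' : v = (g⁻¹).1.mulVec (g.1.mulVec v) := by
    rw [Matrix.mulVec_mulVec, ← Matrix.SpecialLinearGroup.coe_mul, inv_mul_cancel]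
    simp
  have key : ∀ i, ¬ IsUnit (v i) := by
    intro i
    rw [hv']
    have hexp : (g⁻¹).1.mulVec (g.1.mulVec v) i
        = (g⁻¹).1 i 0 * (g.1.mulVec v 0) + (g⁻¹).1 i 1 * (g.1.mulVec v 1) := by
      simp [Matrix.mulVec, dotProduct, Fin.sum_univ_two, Matrix.vecHead, Matrix.vecTail]
    rw [hexp]
    intro hu
    have m0 : (g⁻¹).1 i 0 * (g.1.mulVec v 0) ∈ nonunits R := by
      intro hc
      exact h0 (isUnit_of_mul_isUnit_right hc)
    have m1 : (g⁻¹).1 i 1 * (g.1.mulVec v 1) ∈ nonunits R := by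
      intro hc
      exact h1 (isUnit_of_mul_isUnit_right hc)
    exact (IsLocalRing.nonunits_add m0 m1) hu
  rcases hv with h | h
  · exact key 0 h
  · exact key 1 h

noncomputable instance P1.smul {R : Type*} [CommRing R] [IsLocalRing R] :
    SMul (Matrix.SpecialLinearGroup (Fin 2) R) (P1 R) where
  smul g := Quotient.map
    (fun v => ⟨g.1.mulVec v.1, isUnimodular_mulVec g v.2⟩)
    (by
      rintro x y ⟨u, h⟩
      refine ⟨u, ?_⟩
      simp only [← h]
      rw [Units.smul_def, Units.smul_def, Matrix.mulVec_smul])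

theorem P1.smul_mk {R : Type*} [CommRing R] [IsLocalRing R]
    (g : Matrix.SpecialLinearGroup (Fin 2) R) (v : Fin 2 → R) (h : IsUnimodular v) :
    g • (P1.mk v h) = P1.mk (g.1.mulVec v) (isUnimodular_mulVec g h) := rfl

noncomputable instance P1.mulAction {R : Type*} [CommRing R] [IsLocalRing R] :
    MulAction (Matrix.SpecialLinearGroup (Fin 2) R) (P1 R) where
  one_smul := by
    intro x
    induction x using Quotient.ind with
    | _ v =>
      show Quotient.map _ _ _ = _
      rw [Quotient.map_mk]
      congr 1
      exact Subtype.ext (by simp)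
  mul_smul := by
    intro g h x
    induction x using Quotient.ind with
    | _ v =>
      show Quotient.map _ _ _ = Quotient.map _ _ (Quotient.map _ _ _)
      rw [Quotient.map_mk, Quotient.map_mk, Quotient.map_mk]
      congr 1
      exact Subtype.ext (by
        simp [Matrix.mulVec_mulVec]
        refine ⟨?_, ?_⟩ <;> simp only [Matrix.mul_apply, Fin.sum_univ_two] <;> ring)

theorem zmod_pow_isUnit_iff (p : ℕ) [hp : Fact p.Prime] (n : ℕ) [NeZero n]
    (x : ZMod (p^n)) : IsUnit x ↔ ¬ (p ∣ x.val) := by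
  haveI : NeZero (p^n) := ⟨pow_ne_zero n hp.out.ne_zero⟩
  conv_lhs => rw [← ZMod.natCast_rightInverse x]
  rw [ZMod.isUnit_iff_coprime]
  rw [Nat.coprime_pow_right_iff (Nat.pos_of_ne_zero (NeZero.ne n))]
  rw [Nat.coprime_comm]
  exact hp.out.coprime_iff_not_dvd

instance zmod_pow_isLocalRing (p : ℕ) [hp : Fact p.Prime] (n : ℕ) [NeZero n] :
    IsLocalRing (ZMod (p^n)) := by
  haveI : NeZero (p^n) := ⟨pow_ne_zero n hp.out.ne_zero⟩
  haveI : Fact (1 < p^n) :=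
    ⟨Nat.one_lt_pow (NeZero.ne n) hp.out.one_lt⟩
  refine IsLocalRing.of_nonunits_add ?_
  intro a b ha hb
  rw [mem_nonunits_iff, zmod_pow_isUnit_iff, not_not] at ha hb ⊢
  rw [ZMod.val_add]
  rw [Nat.dvd_mod_iff (dvd_pow_self p (NeZero.ne n))]
  exact Nat.dvd_add ha hb

theorem isUnimodular_pair_left {R : Type*} [CommRing R] {a b : R} (h : IsUnit a) :
    IsUnimodular ![a, b] := Or.inl (by simpa using h)

theorem isUnimodular_pair_right {R : Type*} [CommRing R] {a b : R} (h : IsUnit b) :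
    IsUnimodular ![a, b] := Or.inr (by simpa using h)

/-- The set of unimodular pairs in `R²`. -/
abbrev F1 (R : Type*) [CommRing R] := {v : Fin 2 → R // IsUnimodular v}

noncomputable instance F1.smul {R : Type*} [CommRing R] [IsLocalRing R] :
    SMul (Matrix.SpecialLinearGroup (Fin 2) R) (F1 R) :=
  ⟨fun g v => ⟨g.1.mulVec v.1, isUnimodular_mulVec g v.2⟩⟩

noncomputable instance F1.mulAction {R : Type*} [CommRing R] [IsLocalRing R] :
    MulAction (Matrix.SpecialLinearGroup (Fin 2) R) (F1 R) where
  one_smul v := Subtype.ext (by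
    show (1 : Matrix.SpecialLinearGroup (Fin 2) R).1.mulVec v.1 = v.1
    simp)
  mul_smul g h v := Subtype.ext (by
    show ((g * h : Matrix.SpecialLinearGroup (Fin 2) R)).1.mulVec v.1
      = g.1.mulVec (h.1.mulVec v.1)
    simp [Matrix.mulVec_mulVec]
    refine ⟨?_, ?_⟩ <;> simp only [Matrix.mul_apply, Fin.sum_univ_two] <;> ring)

/-- The unipotent subgroup `Γ₁(R)` of matrices `(1 b; 0 1)` in `SL₂(R)`. -/
def Gamma1 (R : Type*) [CommRing R] : Subgroup (Matrix.SpecialLinearGroup (Fin 2) R) where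
  carrier := {A | A.1 0 0 = 1 ∧ A.1 1 1 = 1 ∧ A.1 1 0 = 0}
  one_mem' := by simp [Matrix.one_apply]
  mul_mem' := by
    intro a b ha hb
    simp only [Set.mem_setOf_eq] at *
    obtain ⟨ha1, ha2, ha3⟩ := ha
    obtain ⟨hb1, hb2, hb3⟩ := hb
    have e : ∀ i j : Fin 2, ((a * b : Matrix.SpecialLinearGroup (Fin 2) _)).1 i j
        = a.1 i 0 * b.1 0 j + a.1 i 1 * b.1 1 j := by
      intro i j
      simp [Matrix.mul_apply, Fin.sum_univ_two]
    refine ⟨?_, ?_, ?_⟩ <;> rw [e] <;>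
      simp [ha1, ha2, ha3, hb1, hb2, hb3]
  inv_mem' := by
    intro a ha
    simp only [Set.mem_setOf_eq] at *
    obtain ⟨ha1, ha2, ha3⟩ := ha
    rw [Matrix.SpecialLinearGroup.SL2_inv_expl]
    simp [ha1, ha2, ha3]


/-!
An element of `Γ₀` sends `(a, b)` to `(u a + x b, u⁻¹ b)`. Writing `b = p ^ k w` with `w` a unit,
the exponent `k` is an orbit invariant, and so is the class of `w a` modulo `p ^ min k (n - k)`:
modulo `p ^ k` because `a` only moves by multiples of `b`, and modulo `p ^ (n - k)` because that
is the ambiguity in `w`. These invariants separate orbits, and every unit class occurs (if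
`0 < min k (n - k)` then `b` is not a unit, so `a` and `w a` are units). Hence the number of orbits
is `∑ₖ φ (p ^ min k (n - k))`, which the symmetry `k ↔ n - k` and `∑_{j ≤ s} φ (p ^ j) = p ^ s`
evaluate.
-/

open Finset
open scoped MatrixGroups Nat

namespace ZMod

theorem castHom_eq_zero_iff_dvd {M N : ℕ} (h : M ∣ N) (x : ZMod N) :
    castHom h (ZMod M) x = 0 ↔ (M : ZMod N) ∣ x := by
  constructor
  · obtain ⟨z, rfl⟩ := intCast_surjective x
    rw [map_intCast, intCast_zmod_eq_zero_iff_dvd]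
    rintro ⟨t, rfl⟩
    exact ⟨t, by push_cast; rfl⟩
  · rintro ⟨y, rfl⟩
    rw [map_mul, map_natCast, natCast_self, zero_mul]

variable {p : ℕ} [hp : Fact p.Prime] {n : ℕ}

theorem prime_pow_eq_zero_iff {k : ℕ} : (p : ZMod (p ^ n)) ^ k = 0 ↔ n ≤ k := by
  rw [← Nat.cast_pow, natCast_eq_zero_iff, Nat.pow_dvd_pow_iff_le_right hp.out.one_lt]

theorem exists_eq_prime_pow_mul_unit (x : ZMod (p ^ n)) :
    ∃ k : Fin (n + 1), ∃ w : (ZMod (p ^ n))ˣ, x = p ^ (k : ℕ) * w := by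
  by_cases hx : x = 0
  · exact ⟨Fin.last n, 1, by simp [hx, prime_pow_eq_zero_iff.mpr le_rfl]⟩
  obtain ⟨e, r, hpr, hr⟩ :=
    Nat.exists_eq_pow_mul_and_not_dvd ((val_ne_zero x).mpr hx) p hp.out.ne_one
  have hx' : x = p ^ e * r := by rw [← natCast_zmod_val x, hr]; push_cast; rfl
  have he : e < n := by
    by_contra! he
    exact hx (by rw [hx', prime_pow_eq_zero_iff.mpr he, zero_mul])
  exact ⟨⟨e, by omega⟩,
    ((isUnit_natCast_iff_not_dvd_pow hp.out (by omega)).mpr hpr).unit, hx'⟩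

theorem prime_pow_mul_eq_zero_iff {k : ℕ} (hk : k ≤ n) {z : ZMod (p ^ n)} :
    (p : ZMod (p ^ n)) ^ k * z = 0 ↔ (p : ZMod (p ^ n)) ^ (n - k) ∣ z := by
  constructor
  · obtain ⟨j, w, rfl⟩ := exists_eq_prime_pow_mul_unit z
    intro h
    rw [← mul_assoc, Units.mul_left_eq_zero, ← pow_add, prime_pow_eq_zero_iff] at h
    exact (pow_dvd_pow _ (by omega)).mul_right _
  · rintro ⟨t, rfl⟩
    rw [← mul_assoc, ← pow_add, Nat.add_sub_cancel' hk, prime_pow_eq_zero_iff.mpr le_rfl,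
      zero_mul]

theorem eq_of_prime_pow_mul_unit_eq {k j : ℕ} (hk : k ≤ n) (hj : j ≤ n)
    {w w' : (ZMod (p ^ n))ˣ} (h : (p : ZMod (p ^ n)) ^ k * w = p ^ j * w') : k = j := by
  wlog hkj : k < j generalizing k j w w'
  · rcases (not_lt.mp hkj).eq_or_lt with hjk | hjk
    · exact hjk.symm
    · exact (this hj hk h.symm hjk).symm
  have hnil : IsNilpotent ((p : ZMod (p ^ n)) ^ (j - k) * w') :=
    (Commute.all _ _).isNilpotent_mul_right <|
      IsNilpotent.pow_of_pos ⟨n, prime_pow_eq_zero_iff.mpr le_rfl⟩ (by omega)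
  have hunit : IsUnit ((w : ZMod (p ^ n)) - p ^ (j - k) * w') := by
    rw [sub_eq_add_neg]
    exact hnil.neg.isUnit_add_left_of_commute w.isUnit (Commute.all _ _)
  have hzero : (p : ZMod (p ^ n)) ^ k * (w - p ^ (j - k) * w') = 0 := by
    rw [mul_sub, h, ← mul_assoc, ← pow_add, Nat.add_sub_cancel' hkj.le, sub_self]
  rw [hunit.mul_left_eq_zero, prime_pow_eq_zero_iff] at hzero
  omega

-- The `p`-adic order truncated at `n`; in particular `pOrd 0 = n`.
noncomputable def pOrd (x : ZMod (p ^ n)) : Fin (n + 1) :=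
  (exists_eq_prime_pow_mul_unit x).choose

noncomputable def pUnitPart (x : ZMod (p ^ n)) : (ZMod (p ^ n))ˣ :=
  (exists_eq_prime_pow_mul_unit x).choose_spec.choose

theorem eq_pow_pOrd_mul_pUnitPart (x : ZMod (p ^ n)) :
    x = p ^ (pOrd x : ℕ) * pUnitPart x :=
  (exists_eq_prime_pow_mul_unit x).choose_spec.choose_spec

theorem pOrd_eq_of_eq_pow_mul {x : ZMod (p ^ n)} {k : Fin (n + 1)} {w : (ZMod (p ^ n))ˣ}
    (h : x = p ^ (k : ℕ) * w) : pOrd x = k :=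
  Fin.ext <| eq_of_prime_pow_mul_unit_eq (Fin.is_le _) (Fin.is_le _)
    ((eq_pow_pOrd_mul_pUnitPart x).symm.trans h)

theorem pow_dvd_pUnitPart_sub_of_eq_pow_mul {x : ZMod (p ^ n)} {k : Fin (n + 1)}
    {w : (ZMod (p ^ n))ˣ} (h : x = p ^ (k : ℕ) * w) :
    (p : ZMod (p ^ n)) ^ (n - k) ∣ pUnitPart x - w := by
  rw [← prime_pow_mul_eq_zero_iff (Fin.is_le k), mul_sub, ← h, ← pOrd_eq_of_eq_pow_mul h,
    ← eq_pow_pOrd_mul_pUnitPart, sub_self]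

theorem not_isUnit_of_pOrd_pos {x : ZMod (p ^ n)} (hx : 0 < (pOrd x : ℕ)) : ¬ IsUnit x := by
  rw [eq_pow_pOrd_mul_pUnitPart x, Units.isUnit_mul_units, isUnit_pow_iff hx.ne']
  exact prime_natCast_not_isUnit_pow hp.out (hx.trans_le (Fin.is_le _))

end ZMod

namespace Gamma0

variable {R : Type*} [CommRing R]

theorem coe_zero_zero_mul_coe_one_one (g : Gamma0 R) :
    (g : SL(2, R)) 0 0 * (g : SL(2, R)) 1 1 = 1 := by
  have hdet := (g : SL(2, R)).2
  rw [Matrix.det_fin_two, show (g : SL(2, R)) 1 0 = 0 from g.2, mul_zero, sub_zero] at hdet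
  exact hdet

def upper (u : Rˣ) (x : R) : Gamma0 R :=
  ⟨⟨!![(u : R), x; 0, ↑u⁻¹], by simp [Matrix.det_fin_two_of]⟩, rfl⟩

variable [IsLocalRing R]

theorem smul_coe (g : Gamma0 R) (v : F1 R) :
    (g • v).1 = ![(g : SL(2, R)) 0 0 * v.1 0 + (g : SL(2, R)) 0 1 * v.1 1,
      (g : SL(2, R)) 1 1 * v.1 1] := by
  have h10 : (g : SL(2, R)) 1 0 = 0 := g.2
  change (g : SL(2, R)).1.mulVec v.1 = _
  ext i
  fin_cases i <;> simp [Matrix.mulVec, dotProduct, Fin.sum_univ_two, h10]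

theorem upper_smul_eq {u : Rˣ} {x : R} {v v' : F1 R}
    (h0 : u * v.1 0 + x * v.1 1 = v'.1 0) (h1 : ↑u⁻¹ * v.1 1 = v'.1 1) :
    upper u x • v = v' := by
  apply Subtype.ext
  rw [smul_coe]
  ext i
  fin_cases i
  exacts [h0, h1]

end Gamma0

section BorelOrbits

open ZMod

variable (p n : ℕ)

noncomputable def reduceModMin (k : ℕ) : ZMod (p ^ n) →+* ZMod (p ^ min k (n - k)) :=
  castHom (pow_dvd_pow p ((min_le_right _ _).trans (Nat.sub_le n k))) _

abbrev BorelLabel := Σ k : Fin (n + 1), (ZMod (p ^ min (k : ℕ) (n - k)))ˣ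

variable {p n}

theorem reduceModMin_eq_iff {k : ℕ} {x y : ZMod (p ^ n)} :
    reduceModMin p n k x = reduceModMin p n k y ↔
      (p : ZMod (p ^ n)) ^ min k (n - k) ∣ x - y := by
  rw [← sub_eq_zero, ← map_sub, reduceModMin, castHom_eq_zero_iff_dvd, Nat.cast_pow]

noncomputable def BorelLabel.mk (k : Fin (n + 1)) (c : ZMod (p ^ n))
    (hc : IsUnit (reduceModMin p n k c)) : BorelLabel p n :=
  ⟨k, hc.unit⟩

theorem BorelLabel.mk_eq_mk_iff {k k' : Fin (n + 1)} {c c' : ZMod (p ^ n)}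
    {hc : IsUnit (reduceModMin p n k c)} {hc' : IsUnit (reduceModMin p n k' c')} :
    mk k c hc = mk k' c' hc' ↔ k = k' ∧ (p : ZMod (p ^ n)) ^ min (k : ℕ) (n - k) ∣ c - c' := by
  simp only [mk, Sigma.mk.inj_iff]
  constructor
  · rintro ⟨rfl, h⟩
    exact ⟨rfl, reduceModMin_eq_iff.mp (by simpa using congrArg Units.val (eq_of_heq h))⟩
  · rintro ⟨rfl, h⟩
    exact ⟨rfl, heq_of_eq (Units.ext (by simpa using reduceModMin_eq_iff.mpr h))⟩

variable [Fact p.Prime]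

theorem isUnit_reduceModMin_pUnitPart_mul {v : Fin 2 → ZMod (p ^ n)} (hv : IsUnimodular v) :
    IsUnit (reduceModMin p n (pOrd (v 1)) (pUnitPart (v 1) * v 0)) := by
  by_cases hm : min (pOrd (v 1) : ℕ) (n - pOrd (v 1)) = 0
  · have : Subsingleton (ZMod (p ^ min (pOrd (v 1) : ℕ) (n - pOrd (v 1)))) :=
      ZMod.subsingleton_iff.mpr (by rw [hm, pow_zero])
    exact isUnit_of_subsingleton _
  · have hv0 : IsUnit (v 0) := hv.resolve_right (not_isUnit_of_pOrd_pos (by omega))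
    exact ((pUnitPart (v 1)).isUnit.mul hv0).map _

variable (p n) in
noncomputable def borelLabel (v : F1 (ZMod (p ^ n))) : BorelLabel p n :=
  .mk (pOrd (v.1 1)) (pUnitPart (v.1 1) * v.1 0) (isUnit_reduceModMin_pUnitPart_mul v.2)

theorem borelLabel_surjective : Function.Surjective (borelLabel p n) := by
  rintro ⟨k, u⟩
  obtain ⟨ũ, rfl⟩ := unitsMap_surjective
    (pow_dvd_pow p ((min_le_right _ _).trans (Nat.sub_le n k))) u
  have hb : (p : ZMod (p ^ n)) ^ (k : ℕ) = p ^ (k : ℕ) * (1 : (ZMod (p ^ n))ˣ) := by simp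
  have hk : pOrd ((p : ZMod (p ^ n)) ^ (k : ℕ)) = k := pOrd_eq_of_eq_pow_mul hb
  refine ⟨⟨![ũ, p ^ (k : ℕ)], isUnimodular_pair_left ũ.isUnit⟩, ?_⟩
  calc borelLabel p n _ = .mk k ũ (ũ.isUnit.map _) := by
        refine BorelLabel.mk_eq_mk_iff.mpr ⟨hk, ?_⟩
        simp only [Matrix.cons_val_one, Matrix.cons_val_zero, hk]
        obtain ⟨s, hs⟩ := pow_dvd_pUnitPart_sub_of_eq_pow_mul hb
        rw [Units.val_one] at hs
        exact (pow_dvd_pow _ (min_le_right _ _)).trans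
          ⟨s * ũ, by linear_combination (ũ : ZMod (p ^ n)) * hs⟩
    _ = ⟨k, unitsMap _ ũ⟩ := Sigma.ext rfl (heq_of_eq (Units.ext rfl))

variable [NeZero n]

theorem borelLabel_smul (g : Gamma0 (ZMod (p ^ n))) (v : F1 (ZMod (p ^ n))) :
    borelLabel p n (g • v) = borelLabel p n v := by
  set u := (g : SL(2, ZMod (p ^ n))) 0 0
  set x := (g : SL(2, ZMod (p ^ n))) 0 1
  set d := (g : SL(2, ZMod (p ^ n))) 1 1
  have hud : u * d = 1 := Gamma0.coe_zero_zero_mul_coe_one_one g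
  have hd : IsUnit d := IsUnit.of_mul_eq_one_right u hud
  have h0 : (g • v).1 0 = u * v.1 0 + x * v.1 1 := by rw [Gamma0.smul_coe]; rfl
  set k := pOrd (v.1 1)
  set w := pUnitPart (v.1 1)
  have hb : v.1 1 = p ^ (k : ℕ) * w := eq_pow_pOrd_mul_pUnitPart _
  have h1 : (g • v).1 1 = p ^ (k : ℕ) * (hd.unit * w : (ZMod (p ^ n))ˣ) := by
    rw [Gamma0.smul_coe, Units.val_mul, IsUnit.unit_spec]
    exact (congrArg (d * ·) hb).trans (by ring)
  obtain ⟨s, hs⟩ := pow_dvd_pUnitPart_sub_of_eq_pow_mul h1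
  rw [Units.val_mul, IsUnit.unit_spec] at hs
  rw [borelLabel, borelLabel, BorelLabel.mk_eq_mk_iff, pOrd_eq_of_eq_pow_mul h1]
  refine ⟨rfl, ?_⟩
  have hsplit : (pUnitPart ((g • v).1 1) : ZMod (p ^ n)) * (g • v).1 0 - w * v.1 0
      = p ^ (k : ℕ) * (d * w * x * w) + p ^ (n - k) * (s * (g • v).1 0) := by
    linear_combination (g • v).1 0 * hs + (d * w) * h0 + (d * w * x) * hb + (w * v.1 0) * hud
  rw [hsplit]
  exact dvd_add ((pow_dvd_pow _ (min_le_left _ _)).mul_right _)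
    ((pow_dvd_pow _ (min_le_right _ _)).mul_right _)

theorem exists_smul_eq_of_borelLabel_eq {v v' : F1 (ZMod (p ^ n))}
    (h : borelLabel p n v = borelLabel p n v') :
    ∃ g : Gamma0 (ZMod (p ^ n)), g • v = v' := by
  rw [borelLabel, borelLabel, BorelLabel.mk_eq_mk_iff] at h
  obtain ⟨hk, t, ht⟩ := h
  set k := pOrd (v.1 1)
  set w := pUnitPart (v.1 1)
  set w' := pUnitPart (v'.1 1)
  have hb : v.1 1 = p ^ (k : ℕ) * w := eq_pow_pOrd_mul_pUnitPart _
  have hb' : v'.1 1 = p ^ (k : ℕ) * w' := hk ▸ eq_pow_pOrd_mul_pUnitPart _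
  -- If `k ≤ n - k`, the diagonal `w / w'` carries `b` to `b'` and the corner entry absorbs
  -- `a' - (w / w') a ∈ p ^ k R`; otherwise `a, a'` are units and a diagonal matrix suffices.
  rcases le_or_gt (k : ℕ) (n - k) with hkn | hkn
  · rw [min_eq_left hkn] at ht
    refine ⟨Gamma0.upper (w * w'⁻¹) (-(↑w'⁻¹ * ↑w⁻¹ * t)), Gamma0.upper_smul_eq ?_ ?_⟩
    · push_cast
      linear_combination ↑w'⁻¹ * ht - (↑w'⁻¹ * ↑w⁻¹ * t) * hb
        - (↑w'⁻¹ * p ^ (k : ℕ) * t) * Units.inv_mul w + v'.1 0 * Units.inv_mul w'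
    · simp only [_root_.mul_inv_rev, inv_inv, Units.val_mul]
      linear_combination (↑w' * ↑w⁻¹) * hb - hb' + (p ^ (k : ℕ) * ↑w') * Units.inv_mul w
  · rw [min_eq_right hkn.le] at ht
    obtain ⟨α, hα⟩ : IsUnit (v.1 0) := v.2.resolve_right (not_isUnit_of_pOrd_pos (by omega))
    obtain ⟨α', hα'⟩ : IsUnit (v'.1 0) :=
      v'.2.resolve_right (not_isUnit_of_pOrd_pos (by omega))
    have hpn : (p : ZMod (p ^ n)) ^ (k : ℕ) * p ^ (n - k) = 0 := by
      rw [← pow_add, prime_pow_eq_zero_iff]; omega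
    refine ⟨Gamma0.upper (α' * α⁻¹) 0, Gamma0.upper_smul_eq ?_ ?_⟩
    · push_cast
      linear_combination (↑α' * ↑α⁻¹) * (-hα) + ↑α' * Units.inv_mul α + hα'
    · simp only [_root_.mul_inv_rev, inv_inv, Units.val_mul]
      linear_combination (↑α * ↑α'⁻¹) * hb - hb' + (↑α'⁻¹ * p ^ (k : ℕ)) * ht
        + (↑α'⁻¹ * p ^ (k : ℕ) * w) * hα - (↑α'⁻¹ * p ^ (k : ℕ) * w') * hα'
        + (p ^ (k : ℕ) * w') * Units.inv_mul α' + (↑α'⁻¹ * t) * hpn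

variable (p n) in
noncomputable def borelOrbitEquiv :
    MulAction.orbitRel.Quotient (Gamma0 (ZMod (p ^ n))) (F1 (ZMod (p ^ n))) ≃ BorelLabel p n :=
  Equiv.ofBijective
    (Quotient.lift (borelLabel p n) fun _ _ ⟨g, hg⟩ => hg ▸ borelLabel_smul g _)
    ⟨by
      rintro ⟨v⟩ ⟨v'⟩ h
      obtain ⟨g, hg⟩ := exists_smul_eq_of_borelLabel_eq h.symm
      exact Quotient.sound ⟨g, hg⟩,
    Function.Surjective.of_comp (g := Quotient.mk _) borelLabel_surjective⟩

theorem card_borel_orbits_eq_sum_totient :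
    Nat.card (MulAction.orbitRel.Quotient (Gamma0 (ZMod (p ^ n))) (F1 (ZMod (p ^ n))))
      = ∑ k ∈ range (n + 1), φ (p ^ min k (n - k)) := by
  rw [Nat.card_congr (borelOrbitEquiv p n), Nat.card_eq_fintype_card, Fintype.card_sigma]
  simp only [ZMod.card_units_eq_totient]
  exact Fin.sum_univ_eq_sum_range (fun k => φ (p ^ min k (n - k))) (n + 1)

end BorelOrbits

theorem Finset.sum_range_succ_min_sub {M : Type*} [AddCommMonoid M] (f : ℕ → M) (n : ℕ) :
    ∑ k ∈ range (n + 1), f (min k (n - k))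
      = ∑ j ∈ range (n / 2 + 1), f j + ∑ j ∈ range ((n + 1) / 2), f j := by
  have hsplit := sum_range_add (fun k => f (min k (n - k))) (n / 2 + 1) ((n + 1) / 2)
  rw [show n / 2 + 1 + (n + 1) / 2 = n + 1 by omega] at hsplit
  rw [hsplit, ← sum_range_reflect _ ((n + 1) / 2)]
  congr 1
  · refine sum_congr rfl fun k hk => ?_
    rw [mem_range] at hk
    rw [min_eq_left (by omega)]
  · refine sum_congr rfl fun j hj => ?_
    rw [mem_range] at hj
    congr 1
    omega

theorem Nat.sum_range_succ_totient_prime_pow {p : ℕ} (hp : p.Prime) (s : ℕ) :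
    ∑ j ∈ range (s + 1), φ (p ^ j) = p ^ s := by
  rw [← Nat.sum_divisors_prime_pow hp, Nat.sum_totient]

theorem card_borel_orbits_F1_general (p : ℕ) [Fact p.Prime] (n : ℕ) [NeZero n] :
    (Odd n →
      Nat.card (MulAction.orbitRel.Quotient (Gamma0 (ZMod (p ^ n))) (F1 (ZMod (p ^ n))))
        = 2 * p ^ ((n - 1) / 2)) ∧
    (Even n →
      Nat.card (MulAction.orbitRel.Quotient (Gamma0 (ZMod (p ^ n))) (F1 (ZMod (p ^ n))))
        = p ^ (n / 2) + p ^ (n / 2 - 1)) := by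
  have hn := NeZero.ne n
  have hcard :
      Nat.card (MulAction.orbitRel.Quotient (Gamma0 (ZMod (p ^ n))) (F1 (ZMod (p ^ n))))
        = p ^ (n / 2) + p ^ ((n - 1) / 2) := by
    rw [card_borel_orbits_eq_sum_totient, sum_range_succ_min_sub (fun j => φ (p ^ j)),
      show (n + 1) / 2 = (n - 1) / 2 + 1 by omega,
      Nat.sum_range_succ_totient_prime_pow Fact.out, Nat.sum_range_succ_totient_prime_pow Fact.out]
  refine ⟨?_, ?_⟩ <;> rintro ⟨s, rfl⟩ <;> rw [hcard]
  · rw [show (2 * s + 1) / 2 = (2 * s + 1 - 1) / 2 by omega]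
    ring
  · rw [show (s + s - 1) / 2 = (s + s) / 2 - 1 by omega]

/-- For an odd prime `p` and `n ≥ 1`, the number of `Γ₀(ℤ/pⁿℤ)`-orbits on the set of
unimodular pairs is `2·p^((n-1)/2)` if `n` is odd and `p^(n/2) + p^(n/2-1)` if `n` is even. -/
theorem card_borel_orbits_F1 (p : ℕ) [Fact p.Prime] (hp2 : p ≠ 2) (n : ℕ) [NeZero n] :
    (Odd n →
      Nat.card (MulAction.orbitRel.Quotient (Gamma0 (ZMod (p ^ n))) (F1 (ZMod (p ^ n))))
        = 2 * p ^ ((n - 1) / 2)) ∧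
    (Even n →
      Nat.card (MulAction.orbitRel.Quotient (Gamma0 (ZMod (p ^ n))) (F1 (ZMod (p ^ n))))
        = p ^ (n / 2) + p ^ (n / 2 - 1)) :=
  card_borel_orbits_F1_general p n
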